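/- Let X be a perfectly paracompact space, Y a regular space, and f : X → Y a Σ⁰₂-measurable mapping. Let A ⊆ Y be a set, let (x₀, V₀), …, (x_{k-1}, V_{k-1}) be finitely many pairs with x_t ∈ X and V_t ⊆ X such that each (x_t, V_t) is f-irreducible outside A, and let X′ ⊆ X be a set with X′ ⊆ A^f and X′ ∉ I_f. Then there exist a point x ∈ cl(X′) and an open set U ⊆ Y strongly disjoint from A such that f(x) ∈ U, each pair (x_t, V_t) is f-irreducible outside A ∪ U, and the pair (x, X′) is f-irreducible outside A ∪ U. -/

import Mathlib

open Set Topology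

/-- A set is Fσ if it is a countable union of closed sets. -/
def IsFsigma {X : Type*} [TopologicalSpace X] (s : Set X) : Prop :=
  ∃ C : ℕ → Set X, (∀ n, IsClosed (C n)) ∧ s = ⋃ n, C n

/-- A map is piecewise continuous if its domain is covered by countably many
closed sets on each of which the map is continuous. -/
def PiecewiseContinuous {X Y : Type*} [TopologicalSpace X] [TopologicalSpace Y]
    (f : X → Y) : Prop :=
  ∃ C : ℕ → Set X, (∀ n, IsClosed (C n)) ∧ (⋃ n, C n) = Set.univ ∧
    ∀ n, ContinuousOn f (C n)

/-- A map is Δ⁰₂-measurable if preimages of open sets are both Fσ and Gδ. -/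
def Delta02Measurable {X Y : Type*} [TopologicalSpace X] [TopologicalSpace Y]
    (f : X → Y) : Prop :=
  ∀ U : Set Y, IsOpen U → IsFsigma (f ⁻¹' U) ∧ IsGδ (f ⁻¹' U)

/-- A map is Σ⁰₂-measurable if preimages of open sets are Fσ. -/
def Sigma02Measurable {X Y : Type*} [TopologicalSpace X] [TopologicalSpace Y]
    (f : X → Y) : Prop :=
  ∀ U : Set Y, IsOpen U → IsFsigma (f ⁻¹' U)

/-- X ⊆ Z is Souslin-F in Z: the result of the A-operation applied to a system
of closed subsets of Z, where `(List.range n).map α` encodes α|n. -/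
def SouslinF {Z : Type*} [TopologicalSpace Z] (X : Set Z) : Prop :=
  ∃ F : List ℕ → Set Z, (∀ s, IsClosed (F s)) ∧
    X = ⋃ α : ℕ → ℕ, ⋂ n : ℕ, F ((List.range n).map α)

/-- A space is completely Baire if every closed subspace is a Baire space. -/
def CompletelyBaire (Z : Type*) [TopologicalSpace Z] : Prop :=
  ∀ s : Set Z, IsClosed s → BaireSpace s

/-- Membership in the σ-ideal I_f: A is contained in an Fσ set F such that
the restriction f|F is piecewise continuous. -/
def MemIf {X Y : Type*} [TopologicalSpace X] [TopologicalSpace Y]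
    (f : X → Y) (A : Set X) : Prop :=
  ∃ F : Set X, IsFsigma F ∧ A ⊆ F ∧ PiecewiseContinuous (F.restrict f)

/-- A^f = f⁻¹(Y \ cl(A)). -/
def Af {X Y : Type*} [TopologicalSpace Y] (f : X → Y) (A : Set Y) : Set X :=
  f ⁻¹' (closure A)ᶜ

/-- The pair (x, X′) is f-irreducible outside A: for every open neighborhood V
of x, A^f ∩ X′ ∩ V ∉ I_f. -/
def IrredOutside {X Y : Type*} [TopologicalSpace X] [TopologicalSpace Y]
    (f : X → Y) (x : X) (X' : Set X) (A : Set Y) : Prop :=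
  ∀ V : Set X, IsOpen V → x ∈ V → ¬ MemIf f (Af f A ∩ X' ∩ V)

/-!
The core step: for `S ⊆ B^f` with `S ∉ I_f` there are `x` and an open `U ∋ f x` strongly disjoint
from `B` such that `(x, S)` is `f`-irreducible outside `B ∪ U`. Call `x` a point where `S` is
locally in `I_f` if `S ∩ V ∈ I_f` for some open `V ∋ x`; these points form an open set `G`. In a
perfectly paracompact space `G` is Fσ and locally finite unions of members of `I_f` stay in `I_f`,
so `S ∩ G ∈ I_f`. If the core step failed, `f` would be continuous on `B^f \ G`, which is Fσ
because `f` is Σ⁰₂-measurable; hence `S ∈ I_f`, a contradiction.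

Applying the core step repeatedly, each time replacing `A` by `A ∪ U`, yields infinitely many
candidates `(xₙ, Uₙ)` with pairwise strongly disjoint `Uₙ`. A pair irreducible outside `A` stays
irreducible outside `A ∪ U` for at least one of two strongly disjoint sets `U`, so by pigeonhole
some candidate works for all `k` given pairs simultaneously.
-/

section

variable {X Y : Type*} [TopologicalSpace Y] {f : X → Y}

theorem af_union (B U : Set Y) : Af f (B ∪ U) = Af f B ∩ f ⁻¹' (closure U)ᶜ := by
  rw [Af, Af, closure_union, compl_union, preimage_inter]

theorem af_anti {A B : Set Y} (h : A ⊆ B) : Af f B ⊆ Af f A :=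
  preimage_mono (compl_subset_compl.2 (closure_mono h))

end

section

variable {X Y : Type*} [TopologicalSpace X] [TopologicalSpace Y] {f : X → Y}

theorem IsOpen.isFsigma (hGδ : ∀ s : Set X, IsClosed s → IsGδ s) {G : Set X} (hG : IsOpen G) :
    IsFsigma G := by
  obtain ⟨T, hT, hGT⟩ := (hGδ Gᶜ hG.isClosed_compl).eq_iInter_nat
  exact ⟨fun n => (T n)ᶜ, fun n => (hT n).isClosed_compl,
    by rw [← compl_iInter, ← hGT, compl_compl]⟩

theorem IsFsigma.inter_isClosed {F C : Set X} (hF : IsFsigma F) (hC : IsClosed C) :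
    IsFsigma (F ∩ C) := by
  obtain ⟨D, hD, rfl⟩ := hF
  exact ⟨fun n => D n ∩ C, fun n => (hD n).inter hC, iUnion_inter C D⟩

theorem MemIf.mono {E E' : Set X} (h : MemIf f E') (hE : E ⊆ E') : MemIf f E :=
  let ⟨F, hF, hE'F, hc⟩ := h
  ⟨F, hF, hE.trans hE'F, hc⟩

theorem memIf_of_continuousOn {E F : Set X} (hF : IsFsigma F) (hEF : E ⊆ F)
    (hc : ContinuousOn f F) : MemIf f E :=
  ⟨F, hF, hEF, fun _ => univ, fun _ => isClosed_univ, iUnion_const univ,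
    fun _ => (continuousOn_iff_continuous_domRestrict.1 hc).continuousOn⟩

theorem memIf_iff {E : Set X} : MemIf f E ↔ ∃ C : ℕ → Set X,
    (∀ n, IsClosed (C n)) ∧ (∀ n, ContinuousOn f (C n)) ∧ E ⊆ ⋃ n, C n := by
  constructor
  · rintro ⟨F, ⟨D, hD, rfl⟩, hEF, P, hP, hPcov, hPc⟩
    choose Z hZ hZP using fun n => isClosed_induced_iff.1 (hP n)
    have hZc : ∀ n, ContinuousOn f ((⋃ m, D m) ∩ Z n) := fun n => by
      rw [← Subtype.image_preimage_coe, IsInducing.subtypeVal.continuousOn_image_iff, hZP n]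
      exact hPc n
    refine ⟨fun k => D k.unpair.2 ∩ Z k.unpair.1, fun k => (hD _).inter (hZ _),
      fun k => (hZc _).mono (inter_subset_inter_left _ (subset_iUnion D _)), fun z hz => ?_⟩
    obtain ⟨n, hn⟩ := mem_iUnion.1 (hPcov.symm ▸ mem_univ (⟨z, hEF hz⟩ : ⋃ m, D m))
    rw [← hZP n] at hn
    obtain ⟨m, hm⟩ := mem_iUnion.1 (hEF hz)
    exact mem_iUnion.2 ⟨Nat.pair n m, by simpa using ⟨hm, hn⟩⟩
  · rintro ⟨C, hC, hc, hEC⟩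
    refine ⟨⋃ n, C n, ⟨C, hC, rfl⟩, hEC, fun n => Subtype.val ⁻¹' C n,
      fun n => (hC n).preimage continuous_subtype_val, ?_, fun n => ?_⟩
    · rw [← preimage_iUnion, Subtype.coe_preimage_self]
    · exact (hc n).comp continuous_subtype_val.continuousOn (mapsTo_preimage _ _)

theorem MemIf.union {E E' : Set X} (h : MemIf f E) (h' : MemIf f E') : MemIf f (E ∪ E') := by
  obtain ⟨C, hC, hc, hEC⟩ := memIf_iff.1 h
  obtain ⟨C', hC', hc', hEC'⟩ := memIf_iff.1 h'
  refine memIf_iff.2 ⟨fun n => C n ∪ C' n, fun n => (hC n).union (hC' n),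
    fun n => (hc n).union_of_isClosed (hc' n) (hC n) (hC' n), ?_⟩
  rw [iUnion_union_distrib]
  exact union_subset_union hEC hEC'

theorem memIf_iUnion {E : ℕ → Set X} (h : ∀ n, MemIf f (E n)) : MemIf f (⋃ n, E n) := by
  choose C hC hc hEC using fun n => memIf_iff.1 (h n)
  refine memIf_iff.2 ⟨fun k => C k.unpair.1 k.unpair.2, fun k => hC _ _, fun k => hc _ _,
    iUnion_subset fun n z hz => ?_⟩
  obtain ⟨m, hm⟩ := mem_iUnion.1 (hEC n hz)
  exact mem_iUnion.2 ⟨Nat.pair n m, by simpa using hm⟩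

theorem memIf_iUnion_of_locallyFinite {ι : Type*} {E : ι → Set X} (hE : LocallyFinite E)
    (h : ∀ i, MemIf f (E i)) : MemIf f (⋃ i, E i) := by
  choose C hC hc hEC using fun i => memIf_iff.1 (h i)
  have hlf : ∀ n, LocallyFinite fun i => C i n ∩ closure (E i) := fun n =>
    hE.closure.subset fun i => inter_subset_right
  have hcl : ∀ n i, IsClosed (C i n ∩ closure (E i)) := fun n i => (hC i n).inter isClosed_closure
  refine memIf_iff.2 ⟨fun n => ⋃ i, C i n ∩ closure (E i), fun n => (hlf n).isClosed_iUnion (hcl n),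
    fun n => (hlf n).continuousOn_iUnion (hcl n) fun i => (hc i n).mono inter_subset_left,
    iUnion_subset fun i z hz => ?_⟩
  obtain ⟨n, hn⟩ := mem_iUnion.1 (hEC i hz)
  exact mem_iUnion.2 ⟨n, mem_iUnion.2 ⟨i, hn, subset_closure hz⟩⟩

theorem memIf_empty : MemIf f ∅ :=
  memIf_of_continuousOn ⟨fun _ => ∅, fun _ => isClosed_empty, iUnion_empty.symm⟩ subset_rfl
    (continuousOn_empty f)

theorem nonempty_of_not_memIf {E : Set X} (h : ¬ MemIf f E) : E.Nonempty :=
  nonempty_iff_ne_empty.2 fun hE => h (hE ▸ memIf_empty)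

def memIfLocus (f : X → Y) (S : Set X) : Set X :=
  {x | ∃ V, IsOpen V ∧ x ∈ V ∧ MemIf f (S ∩ V)}

theorem isOpen_memIfLocus (S : Set X) : IsOpen (memIfLocus f S) :=
  isOpen_iff_forall_mem_open.2 fun _ ⟨V, hV, hxV, hSV⟩ => ⟨V, fun _ hy => ⟨V, hV, hy, hSV⟩, hV, hxV⟩

theorem memIfLocus_anti {S T : Set X} (h : S ⊆ T) : memIfLocus f T ⊆ memIfLocus f S :=
  fun _ ⟨V, hV, hxV, hTV⟩ => ⟨V, hV, hxV, hTV.mono (inter_subset_inter_left V h)⟩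

theorem inter_memIfLocus_subset (S T : Set X) :
    memIfLocus f S ∩ memIfLocus f T ⊆ memIfLocus f (S ∪ T) := by
  rintro x ⟨⟨V, hV, hxV, hSV⟩, ⟨W, hW, hxW, hTW⟩⟩
  refine ⟨V ∩ W, hV.inter hW, ⟨hxV, hxW⟩, (hSV.union hTW).mono ?_⟩
  rw [union_inter_distrib_right]
  exact union_subset_union (inter_subset_inter_right S inter_subset_left)
    (inter_subset_inter_right T inter_subset_right)

theorem irredOutside_iff {x : X} {S : Set X} {B : Set Y} :
    IrredOutside f x S B ↔ x ∉ memIfLocus f (Af f B ∩ S) := by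
  simp [IrredOutside, memIfLocus]

theorem memIf_inter_of_isClosed [ParacompactSpace X] {S E : Set X} (hE : IsClosed E)
    (hES : E ⊆ memIfLocus f S) : MemIf f (S ∩ E) := by
  have hloc : ∀ x ∈ E, ∃ V, IsOpen V ∧ x ∈ V ∧ MemIf f (S ∩ V) := hES
  choose! V hV hxV hSV using hloc
  obtain ⟨v, -, hEv, hlf, hvV⟩ := precise_refinement_set hE (fun x : E => V x) (fun x => hV x x.2)
    fun x hx => mem_iUnion.2 ⟨⟨x, hx⟩, hxV x hx⟩
  refine (memIf_iUnion_of_locallyFinite (hlf.subset fun _ => inter_subset_right)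
    fun i => (hSV i i.2).mono (inter_subset_inter_right S (hvV i))).mono ?_
  rintro z ⟨hzS, hzE⟩
  obtain ⟨i, hi⟩ := mem_iUnion.1 (hEv hzE)
  exact mem_iUnion.2 ⟨i, hzS, hi⟩

theorem memIf_inter_memIfLocus [ParacompactSpace X] (hGδ : ∀ s : Set X, IsClosed s → IsGδ s)
    (S : Set X) : MemIf f (S ∩ memIfLocus f S) := by
  obtain ⟨E, hE, hEq⟩ := (isOpen_memIfLocus (f := f) S).isFsigma hGδ
  rw [hEq, inter_iUnion]
  exact memIf_iUnion fun n =>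
    memIf_inter_of_isClosed (hE n) ((subset_iUnion E n).trans hEq.superset)

theorem continuousOn_diff_memIfLocus [RegularSpace Y] {S D : Set X}
    (hD : ∀ x ∈ D, ∀ O, IsOpen O → f x ∈ O → x ∈ memIfLocus f (S ∩ f ⁻¹' Oᶜ)) :
    ContinuousOn f (D \ memIfLocus f S) := by
  intro x hx
  refine (hasBasis_opens_closure (f x)).tendsto_right_iff.2 fun U ⟨hxU, hU⟩ => ?_
  obtain ⟨V, hV, hxV, hSV⟩ := hD x hx.1 U hU hxU
  -- If `f z ∉ closure U`, then `S` is in `I_f` near `z`: off `U` inside `V` by the choice of `V`,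
  -- and on `closure U` by `hD z`.
  refine mem_nhdsWithin.2 ⟨V, hV, hxV, fun z ⟨hzV, hzD, hzS⟩ => by_contra fun hzU => hzS ?_⟩
  refine memIfLocus_anti (fun w hw => ?_) (inter_memIfLocus_subset _ _
    ⟨⟨V, hV, hzV, hSV⟩, hD z hzD _ isClosed_closure.isOpen_compl hzU⟩)
  by_cases hwU : f w ∈ closure U
  · exact Or.inr ⟨hw, by simpa using hwU⟩
  · exact Or.inl ⟨hw, fun h => hwU (subset_closure h)⟩

theorem exists_irredOutside_union [ParacompactSpace X] (hGδ : ∀ s : Set X, IsClosed s → IsGδ s)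
    [RegularSpace Y] (hf : Sigma02Measurable f) {B : Set Y} {S : Set X} (hSB : S ⊆ Af f B)
    (hS : ¬ MemIf f S) :
    ∃ x U, IsOpen U ∧ Disjoint (closure U) (closure B) ∧ f x ∈ U ∧ IrredOutside f x S (B ∪ U) := by
  by_contra! hcon
  simp only [irredOutside_iff, not_not] at hcon
  have hloc : ∀ x ∈ Af f B, ∀ O, IsOpen O → f x ∈ O → x ∈ memIfLocus f (S ∩ f ⁻¹' Oᶜ) := by
    intro x hx O hO hxO
    obtain ⟨U, ⟨hxU, hU⟩, hUO⟩ := (hasBasis_opens_closure (f x)).mem_iff.1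
      ((hO.inter isClosed_closure.isOpen_compl).mem_nhds ⟨hxO, hx⟩)
    have hSO : S ∩ f ⁻¹' Oᶜ ⊆ Af f (B ∪ U) ∩ S := by
      rintro z ⟨hzS, hzO⟩
      rw [af_union]
      exact ⟨⟨hSB hzS, fun h => hzO (hUO h).1⟩, hzS⟩
    exact memIfLocus_anti hSO
      (hcon x U hU (subset_compl_iff_disjoint_right.1 fun y hy => (hUO hy).2) hxU)
  have hF : IsFsigma (Af f B \ memIfLocus f S) :=
    (hf _ isClosed_closure.isOpen_compl).inter_isClosed (isOpen_memIfLocus S).isClosed_compl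
  refine hS (((memIf_inter_memIfLocus hGδ S).union
    (memIf_of_continuousOn hF subset_rfl (continuousOn_diff_memIfLocus hloc))).mono fun z hz => ?_)
  by_cases hzG : z ∈ memIfLocus f S
  exacts [Or.inl ⟨hz, hzG⟩, Or.inr ⟨hSB hz, hzG⟩]

namespace IrredOutside

variable {x : X} {S : Set X} {A : Set Y}

theorem mono {T : Set X} {B : Set Y} (h : IrredOutside f x S B) (hST : S ⊆ T) (hAB : A ⊆ B) :
    IrredOutside f x T A := by
  rw [irredOutside_iff] at h ⊢
  exact fun hx => h (memIfLocus_anti (inter_subset_inter (af_anti hAB) hST) hx)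

theorem not_memIf (h : IrredOutside f x S A) : ¬ MemIf f (Af f A ∩ S) := by
  simpa using h univ isOpen_univ (mem_univ x)

theorem mem_closure (h : IrredOutside f x S A) : x ∈ closure S :=
  mem_closure_iff.2 fun V hV hxV => by
    obtain ⟨z, ⟨-, hzS⟩, hzV⟩ := nonempty_of_not_memIf (h V hV hxV)
    exact ⟨z, hzV, hzS⟩

theorem union_or_union (h : IrredOutside f x S A) {U₁ U₂ : Set Y}
    (hU : Disjoint (closure U₁) (closure U₂)) :
    IrredOutside f x S (A ∪ U₁) ∨ IrredOutside f x S (A ∪ U₂) := by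
  simp only [irredOutside_iff] at h ⊢
  refine not_and_or.1 fun hx => h (memIfLocus_anti ?_ (inter_memIfLocus_subset _ _ hx))
  rintro z ⟨hzA, hzS⟩
  rw [af_union, af_union]
  by_cases hz : f z ∈ closure U₁
  · exact Or.inr ⟨⟨hzA, hU.notMem_of_mem_left hz⟩, hzS⟩
  · exact Or.inl ⟨⟨hzA, hz⟩, hzS⟩

end IrredOutside

theorem exists_seq_irredOutside [ParacompactSpace X] (hGδ : ∀ s : Set X, IsClosed s → IsGδ s)
    [RegularSpace Y] (hf : Sigma02Measurable f) {A : Set Y} {X' : Set X} (hsub : X' ⊆ Af f A)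
    (hX' : ¬ MemIf f X') :
    ∃ (x : ℕ → X) (U : ℕ → Set Y), (∀ n, IsOpen (U n) ∧ Disjoint (closure (U n)) (closure A) ∧
      f (x n) ∈ U n ∧ IrredOutside f (x n) X' (A ∪ U n)) ∧
      Pairwise fun m n => Disjoint (closure (U m)) (closure (U n)) := by
  let Good := {B : Set Y // ¬ MemIf f (X' ∩ Af f B)}
  choose x U hU hUB hxU hirr using fun B : Good =>
    exists_irredOutside_union hGδ hf inter_subset_right B.2
  let next (B : Good) : Good := ⟨B.1 ∪ U B, fun h => (hirr B).not_memIf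
    (h.mono fun _ ⟨hzB, hzX, _⟩ => ⟨hzX, hzB⟩)⟩
  let B (n : ℕ) : Good := next^[n] ⟨A, by rwa [inter_eq_left.2 hsub]⟩
  have hBsucc (n : ℕ) : (B (n + 1)).1 = (B n).1 ∪ U (B n) :=
    congrArg Subtype.val (Function.iterate_succ_apply' next n _)
  have hBmono : Monotone fun n => (B n).1 :=
    monotone_nat_of_le_succ fun n => (hBsucc n).symm ▸ subset_union_left
  have hAB (n : ℕ) : A ⊆ (B n).1 := hBmono (Nat.zero_le n)
  refine ⟨fun n => x (B n), fun n => U (B n), fun n => ⟨hU _, ?_, hxU _, ?_⟩, ?_⟩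
  · exact (hUB _).mono_right (closure_mono (hAB n))
  · exact (hirr _).mono inter_subset_left (union_subset_union_left _ (hAB n))
  · refine (pairwise_disjoint_on _).2 fun m n hmn => ((hUB (B n)).mono_right (closure_mono ?_)).symm
    calc U (B m) ⊆ (B (m + 1)).1 := (hBsucc m).symm ▸ subset_union_right
      _ ⊆ (B n).1 := hBmono hmn

theorem exists_forall_irredOutside_union {ι : Type*} [Finite ι] {xs : ι → X} {Vs : ι → Set X}
    {A : Set Y} (hirr : ∀ t, IrredOutside f (xs t) (Vs t) A) {U : ℕ → Set Y}
    (hU : Pairwise fun m n => Disjoint (closure (U m)) (closure (U n))) :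
    ∃ n, ∀ t, IrredOutside f (xs t) (Vs t) (A ∪ U n) := by
  by_contra! hbad
  choose g hg using hbad
  obtain ⟨m, n, hgmn, hmn⟩ := Function.not_injective_iff.1 (not_injective_infinite_finite g)
  rcases (hirr (g m)).union_or_union (hU hmn) with h | h
  exacts [hg m h, hg n (hgmn ▸ h)]

end

/-- The Claim in the proof of the main lemma: given finitely many pairs
(x_t, V_t) each f-irreducible outside A, and X′ ⊆ A^f with X′ ∉ I_f, there are
x ∈ cl(X′) and an open U strongly disjoint from A with f(x) ∈ U such that every
(x_t, V_t), as well as (x, X′), is f-irreducible outside A ∪ U. -/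
theorem statement10 {X Y : Type*} [TopologicalSpace X] [TopologicalSpace Y]
    [ParacompactSpace X] (hGdelta : ∀ s : Set X, IsClosed s → IsGδ s)
    [RegularSpace Y]
    (f : X → Y) (hf : Sigma02Measurable f)
    (A : Set Y) (k : ℕ) (xs : Fin k → X) (Vs : Fin k → Set X)
    (hirr : ∀ t, IrredOutside f (xs t) (Vs t) A)
    (X' : Set X) (hsub : X' ⊆ Af f A) (hX' : ¬ MemIf f X') :
    ∃ x ∈ closure X', ∃ U : Set Y, IsOpen U ∧ closure U ∩ closure A = ∅ ∧
      f x ∈ U ∧ (∀ t, IrredOutside f (xs t) (Vs t) (A ∪ U)) ∧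
      IrredOutside f x X' (A ∪ U) := by
  obtain ⟨x, U, hxU, hdisj⟩ := exists_seq_irredOutside hGdelta hf hsub hX'
  obtain ⟨n, hn⟩ := exists_forall_irredOutside_union hirr hdisj
  obtain ⟨hU, hUA, hfx, hirrX⟩ := hxU n
  exact ⟨x n, hirrX.mem_closure, U n, hU, disjoint_iff_inter_eq_empty.1 hUA, hfx, hn, hirrX⟩
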